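/- arXiv:1810.12230 — 4 statements merged into one kernel-verified Lean document; each statement's English description precedes it below -/
import Mathlib

section
/- Let q > 1, M > 0, N ≥ 2, and suppose w : (R,∞) → (0,∞) is C¹ and satisfies w'(r) ≥ M·r^((1−q)(N−1))·w(r)^q for all r > R, with w(r) → ℓ ∈ (0,∞] as r → ∞. If q > N/(N−1), then w(s) ≤ ((q−1)(N−1)−1)/((q−1)M))^(1/(q−1)) · s^(N−1−1/(q−1)) for all s > R. If 1 < q ≤ N/(N−1), no such w exists. -/
/-!
Since `q > 1`, the inequality `w' ≥ g w^q` says that `w^(1-q)` decreases at least as fast as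
`(q-1) P` increases, where `P' = g`. As `w^(1-q) > 0`, the increase of `P` on `[s, ∞)` is at most
`w(s)^(1-q)/(q-1)`. For `g = M r^(-α)` with `α ≤ 1` this is impossible, since `g ≥ M/r` for
`r ≥ 1` and `M log r` is unbounded. For `α > 1` the increase is `M s^(1-α)/(α-1)`, so
`(q-1) M s^(1-α)/(α-1) ≤ w(s)^(1-q)`, which is the claimed bound on `w(s)`.
With `α = (q-1)(N-1)` the dividing line `α = 1` is `q = N/(N-1)`.
-/
open Filter Real Set Topology

section

variable {R q : ℝ} {w w' g P : ℝ → ℝ}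

theorem antitoneOn_rpow_one_sub_add_mul (hq : 1 < q)
    (hw : ∀ r, R < r → HasDerivAt w (w' r) r) (hpos : ∀ r, R < r → 0 < w r)
    (hP : ∀ r, R < r → HasDerivAt P (g r) r) (hineq : ∀ r, R < r → g r * w r ^ q ≤ w' r) :
    AntitoneOn (fun r => w r ^ (1 - q) + (q - 1) * P r) (Ioi R) := by
  have hderiv : ∀ r ∈ Ioi R, HasDerivAt (fun r => w r ^ (1 - q) + (q - 1) * P r)
      (w' r * (1 - q) * w r ^ (1 - q - 1) + (q - 1) * g r) r := fun r hr =>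
    ((hw r hr).rpow_const (Or.inl (hpos r hr).ne')).add ((hP r hr).const_mul _)
  refine antitoneOn_of_hasDerivWithinAt_nonpos (convex_Ioi R)
    (fun r hr => (hderiv r hr).continuousAt.continuousWithinAt)
    (fun r hr => (hderiv r (interior_subset hr)).hasDerivWithinAt) fun r hr => ?_
  rw [interior_Ioi] at hr
  have hwr := hpos r hr
  have hcancel : w r ^ q * w r ^ (-q) = 1 := by rw [← rpow_add hwr]; simp
  have hg : g r ≤ w' r * w r ^ (-q) := by
    calc g r = g r * w r ^ q * w r ^ (-q) := by rw [mul_assoc, hcancel, mul_one]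
      _ ≤ w' r * w r ^ (-q) := by gcongr; exact hineq r hr
  rw [show 1 - q - 1 = -q by ring]
  have := mul_le_mul_of_nonneg_left hg (sub_nonneg.2 hq.le)
  linarith

theorem mul_sub_le_rpow_one_sub (hq : 1 < q)
    (hw : ∀ r, R < r → HasDerivAt w (w' r) r) (hpos : ∀ r, R < r → 0 < w r)
    (hP : ∀ r, R < r → HasDerivAt P (g r) r) (hineq : ∀ r, R < r → g r * w r ^ q ≤ w' r)
    {s T : ℝ} (hs : R < s) (hsT : s ≤ T) :
    (q - 1) * (P T - P s) ≤ w s ^ (1 - q) := by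
  have hT : R < T := hs.trans_le hsT
  have hmono := antitoneOn_rpow_one_sub_add_mul hq hw hpos hP hineq hs hT hsT
  have hwT : 0 < w T ^ (1 - q) := rpow_pos_of_pos (hpos T hT) _
  simp only at hmono
  linarith

variable {M α : ℝ}

theorem mul_rpow_one_sub_le_rpow_one_sub (hR : 0 ≤ R) (hq : 1 < q) (hα : 1 < α)
    (hw : ∀ r, R < r → HasDerivAt w (w' r) r) (hpos : ∀ r, R < r → 0 < w r)
    (hineq : ∀ r, R < r → M * r ^ (-α) * w r ^ q ≤ w' r) {s : ℝ} (hs : R < s) :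
    (q - 1) * M / (α - 1) * s ^ (1 - α) ≤ w s ^ (1 - q) := by
  have hα1 : 0 < α - 1 := sub_pos.2 hα
  have hP : ∀ r, R < r →
      HasDerivAt (fun r => -(M / (α - 1)) * r ^ (1 - α)) (M * r ^ (-α)) r := by
    intro r hr
    refine ((hasDerivAt_rpow_const (p := 1 - α) (Or.inl (hR.trans_lt hr).ne')).const_mul
      _).congr_deriv ?_
    rw [show 1 - α - 1 = -α by ring]
    field_simp
    ring
  have hP0 : Tendsto (fun r => -(M / (α - 1)) * r ^ (1 - α)) atTop (𝓝 0) := by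
    rw [show 1 - α = -(α - 1) by ring]
    simpa using (tendsto_rpow_neg_atTop hα1).const_mul (-(M / (α - 1)))
  have hbound := le_of_tendsto ((hP0.sub_const _).const_mul (q - 1))
    ((eventually_ge_atTop s).mono fun T hsT => mul_sub_le_rpow_one_sub hq hw hpos hP hineq hs hsT)
  calc (q - 1) * M / (α - 1) * s ^ (1 - α)
      = (q - 1) * (0 - -(M / (α - 1)) * s ^ (1 - α)) := by ring
    _ ≤ w s ^ (1 - q) := hbound

theorem le_mul_rpow_of_mul_rpow_neg_mul_rpow_le (hR : 0 ≤ R) (hq : 1 < q) (hM : 0 < M)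
    (hα : 1 < α) (hw : ∀ r, R < r → HasDerivAt w (w' r) r) (hpos : ∀ r, R < r → 0 < w r)
    (hineq : ∀ r, R < r → M * r ^ (-α) * w r ^ q ≤ w' r) {s : ℝ} (hs : R < s) :
    w s ≤ ((α - 1) / ((q - 1) * M)) ^ (1 / (q - 1)) * s ^ ((α - 1) / (q - 1)) := by
  have hq1 : 0 < q - 1 := sub_pos.2 hq
  have hs0 : 0 < s := hR.trans_lt hs
  have hc : 0 < (q - 1) * M / (α - 1) := div_pos (mul_pos hq1 hM) (sub_pos.2 hα)
  have hbound := mul_rpow_one_sub_le_rpow_one_sub hR hq hα hw hpos hineq hs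
  have hroot := (le_rpow_inv_iff_of_neg (hpos s hs) (mul_pos hc (rpow_pos_of_pos hs0 _))
    (sub_neg.2 hq)).2 hbound
  calc w s ≤ ((q - 1) * M / (α - 1) * s ^ (1 - α)) ^ (1 - q)⁻¹ := hroot
    _ = ((α - 1) / ((q - 1) * M)) ^ (1 / (q - 1)) * s ^ ((α - 1) / (q - 1)) := by
      rw [mul_rpow hc.le (rpow_nonneg hs0.le _), ← rpow_mul hs0.le,
        show (1 - q)⁻¹ = -(1 / (q - 1)) by rw [one_div, ← inv_neg, neg_sub], rpow_neg hc.le,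
        ← inv_rpow hc.le, inv_div]
      congr 2
      field_simp
      ring

theorem false_of_mul_rpow_neg_mul_rpow_le (hq : 1 < q) (hM : 0 < M) (hα : α ≤ 1)
    (hw : ∀ r, R < r → HasDerivAt w (w' r) r) (hpos : ∀ r, R < r → 0 < w r)
    (hineq : ∀ r, R < r → M * r ^ (-α) * w r ^ q ≤ w' r) : False := by
  set R₁ := max R 1
  have hR₁ : ∀ r, R₁ < r → R < r := fun r hr => (le_max_left _ _).trans_lt hr
  have hone : ∀ r, R₁ < r → 1 < r := fun r hr => (le_max_right _ _).trans_lt hr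
  have hlog : ∀ r, R₁ < r → HasDerivAt (fun r => M * log r) (M * r⁻¹) r := fun r hr =>
    ((hasDerivAt_log (zero_lt_one.trans (hone r hr)).ne').const_mul M)
  have hineq₁ : ∀ r, R₁ < r → M * r⁻¹ * w r ^ q ≤ w' r := by
    intro r hr
    refine le_trans ?_ (hineq r (hR₁ r hr))
    have hinv : r⁻¹ ≤ r ^ (-α) := by
      rw [← rpow_neg_one]
      exact rpow_le_rpow_of_exponent_le (hone r hr).le (by linarith)
    gcongr
    exact rpow_nonneg (hpos r (hR₁ r hr)).le _
  set s := R₁ + 1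
  have hs : R₁ < s := lt_add_one R₁
  have hgrowth : Tendsto (fun T => (q - 1) * (M * log T - M * log s)) atTop atTop :=
    (tendsto_atTop_add_const_right _ _ (tendsto_log_atTop.const_mul_atTop hM)).const_mul_atTop
      (sub_pos.2 hq)
  obtain ⟨T, hlarge, hsT⟩ :=
    ((hgrowth.eventually_gt_atTop (w s ^ (1 - q))).and (eventually_ge_atTop s)).exists
  exact hlarge.not_ge (mul_sub_le_rpow_one_sub hq (fun r hr => hw r (hR₁ r hr))
    (fun r hr => hpos r (hR₁ r hr)) hlog hineq₁ hs hsT)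

end

theorem stmt7_general (N q M R : ℝ) (hN : 2 ≤ N) (hq : 1 < q) (hM : 0 < M) (hR : 0 ≤ R)
    (w w' : ℝ → ℝ)
    (hw : ∀ r : ℝ, R < r → HasDerivAt w (w' r) r)
    (hpos : ∀ r : ℝ, R < r → 0 < w r)
    (hineq : ∀ r : ℝ, R < r → M * r ^ ((1 - q) * (N - 1)) * w r ^ q ≤ w' r) :
    (N / (N - 1) < q → ∀ s : ℝ, R < s →
      w s ≤ (((q - 1) * (N - 1) - 1) / ((q - 1) * M)) ^ (1 / (q - 1))
        * s ^ (N - 1 - 1 / (q - 1))) ∧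
    (q ≤ N / (N - 1) → False) := by
  have hN1 : 0 < N - 1 := by linarith
  rw [show (1 - q) * (N - 1) = -((q - 1) * (N - 1)) by ring] at hineq
  have hcrit : N / (N - 1) < q ↔ 1 < (q - 1) * (N - 1) := by
    rw [div_lt_iff₀ hN1]
    constructor <;> intro h <;> linarith
  refine ⟨fun hsuper s hs => ?_, fun hsub => ?_⟩
  · convert le_mul_rpow_of_mul_rpow_neg_mul_rpow_le hR hq hM (hcrit.1 hsuper) hw hpos hineq hs
      using 3
    field_simp [(sub_pos.2 hq).ne']
  · exact false_of_mul_rpow_neg_mul_rpow_le hq hM (not_lt.1 fun h => hsub.not_gt (hcrit.2 h))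
      hw hpos hineq

/-- ODE estimate for w'(r) ≥ M·r^((1−q)(N−1))·w(r)^q with w → ℓ ∈ (0,∞]:
upper bound for w when q > N/(N−1), nonexistence when 1 < q ≤ N/(N−1). -/
theorem stmt7 (N q M R : ℝ) (hN : 2 ≤ N) (hq : 1 < q) (hM : 0 < M) (hR : 0 ≤ R)
    (w w' : ℝ → ℝ)
    (hw : ∀ r : ℝ, R < r → HasDerivAt w (w' r) r)
    (hpos : ∀ r : ℝ, R < r → 0 < w r)
    (hineq : ∀ r : ℝ, R < r → M * r ^ ((1 - q) * (N - 1)) * w r ^ q ≤ w' r)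
    (hlim : Filter.Tendsto w Filter.atTop Filter.atTop ∨
      ∃ ℓ : ℝ, 0 < ℓ ∧ Filter.Tendsto w Filter.atTop (nhds ℓ)) :
    (N / (N - 1) < q → ∀ s : ℝ, R < s →
      w s ≤ (((q - 1) * (N - 1) - 1) / ((q - 1) * M)) ^ (1 / (q - 1))
        * s ^ (N - 1 - 1 / (q - 1))) ∧
    (q ≤ N / (N - 1) → False) :=
  stmt7_general N q M R hN hq hM hR w w' hw hpos hineq
end

section
/- Let N ≥ 3 and 1 < p < (N+2)/(N−2). Then there exist real numbers m and d satisfying simultaneously: (i) d ≠ m+2; (ii) d > 2(N−1)p/(N+2); (iii) max{−2, 1−p, ((N−4)p−N)/2} < m ≤ 0; (iv) 2(N−m)d − (N−1)(m² + d²) > 0. -/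
set_option maxHeartbeats 800000 in
private lemma stmt13_aux1 (n p L U : ℝ) (hp1 : 1 < p) (hpc : p * (n - 2) < n + 2)
    (hn : 3 ≤ n) (hL0 : 0 < L) (hU : U * (n - 1) = 2 * n) (hLltU : L < U) :
    ∃ m d : ℝ,
      d ≠ m + 2 ∧
      L < d ∧
      max (max (-2) (1 - p)) (((n - 4) * p - n) / 2) < m ∧ m ≤ 0 ∧
      0 < 2 * (n - m) * d - (n - 1) * (m ^ 2 + d ^ 2) := by
  have hn1 : (0:ℝ) < n - 1 := by linarith
  have hthird : ((n - 4) * p - n) / 2 < 0 := by nlinarith [hpc, hp1]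
  have key : ∀ d : ℝ, L < d → d < U → d ≠ 2 →
      ∃ m d' : ℝ,
        d' ≠ m + 2 ∧
        L < d' ∧
        max (max (-2) (1 - p)) (((n - 4) * p - n) / 2) < m ∧ m ≤ 0 ∧
        0 < 2 * (n - m) * d' - (n - 1) * (m ^ 2 + d' ^ 2) := by
    intro d hd1 hd2 hd3
    refine ⟨0, d, by simpa using hd3, hd1, ?_, le_refl 0, ?_⟩
    · exact max_lt (max_lt (by norm_num) (by linarith)) hthird
    · have hd0 : 0 < d := lt_trans hL0 hd1
      have : d * (n - 1) < 2 * n := by nlinarith [hU, hn1]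
      nlinarith [mul_pos hd0 hd0]
  by_cases h2 : (L + U) / 2 = 2
  · refine key ((3 * L + U) / 4) (by linarith) (by linarith) ?_
    intro h
    have h' : 3 * L + U = 8 := by linarith
    have h'' : L + U = 4 := by linarith
    linarith
  · exact key ((L + U) / 2) (by linarith) (by linarith) h2

set_option maxHeartbeats 800000 in
private lemma stmt13_aux2 (n p L m : ℝ) (hp1 : 1 < p) (hpc : p * (n - 2) < n + 2)
    (hn : 3 ≤ n) (hL0 : 0 < L) (hLeq : L * (n + 2) = 2 * (n - 1) * p)
    (hc : n * (n + 2) ≤ (n - 1) ^ 2 * p)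
    (hM : (n - 2) * L < 2 * (n - 1))
    (hmeq : m * (n - 1) = -L) (hmp : m * (n + 2) = -(2 * p)) (hm0 : m ≤ 0) :
    ∃ m' d : ℝ,
      d ≠ m' + 2 ∧
      L < d ∧
      max (max (-2) (1 - p)) (((n - 4) * p - n) / 2) < m' ∧ m' ≤ 0 ∧
      0 < 2 * (n - m') * d - (n - 1) * (m' ^ 2 + d ^ 2) := by
  have hn1 : (0:ℝ) < n - 1 := by linarith
  have hn2 : (0:ℝ) < n - 2 := by linarith
  have hn0 : (0:ℝ) < n := by linarith
  have hnp2 : (0:ℝ) < n + 2 := by linarith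
  have hm2 : -2 < m := by nlinarith [hmp, hpc, hp1, hn2, hnp2]
  have hpn : n + 2 < p * n := by nlinarith [hc, hp1, hn0]
  have hm1p : 1 - p < m := by nlinarith [hmp, hpn, hnp2]
  have key3 : p * (n ^ 2 - 2 * n - 4) < n ^ 2 + 2 * n := by
    nlinarith [mul_lt_mul_of_pos_left hpc hn0, hp1]
  have h2m : (n - 4) * p - n < 2 * m := by
    nlinarith [hmp, key3, hnp2]
  have hm3 : ((n - 4) * p - n) / 2 < m := by linarith
  have hmmax : max (max (-2) (1 - p)) (((n - 4) * p - n) / 2) < m :=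
    max_lt (max_lt hm2 hm1p) hm3
  -- value of the quadratic at d = L
  obtain ⟨A, hAdef, hA0⟩ :
      ∃ A : ℝ, A = 2 * (n - m) * L - (n - 1) * (m ^ 2 + L ^ 2) ∧ 0 < A := by
    refine ⟨_, rfl, ?_⟩
    have hAid : (2 * (n - m) * L - (n - 1) * (m ^ 2 + L ^ 2)) * (n - 1)
        = n * L * (2 * (n - 1) - (n - 2) * L) := by
      linear_combination (-(m * (n - 1) + L)) * hmeq
    nlinarith [hAid, mul_pos (mul_pos hn0 hL0)
      (show (0:ℝ) < 2 * (n - 1) - (n - 2) * L by linarith), hn1]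
  obtain ⟨δ, hδ0, hδ1, hδK⟩ :
      ∃ δ : ℝ, 0 < δ ∧ δ ≤ 1 ∧ δ * (A + 2 * (n + 2) + 2 * (n - 1) * L + (n - 1)) = A := by
    have hK0 : 0 < A + 2 * (n + 2) + 2 * (n - 1) * L + (n - 1) := by
      nlinarith [hA0, hL0, hn1, hnp2]
    refine ⟨A / (A + 2 * (n + 2) + 2 * (n - 1) * L + (n - 1)), div_pos hA0 hK0, ?_,
      div_mul_cancel₀ _ hK0.ne'⟩
    rw [div_le_one hK0]
    nlinarith [hL0, hn1, hnp2]
  have hb : δ * (2 * (n - 1) * L + (n - 1)) < A := by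
    nlinarith [hδK, mul_pos hδ0 (show (0:ℝ) < A + 2 * (n + 2) by linarith)]
  have key : ∀ e : ℝ, 0 < e → e ≤ δ →
      0 < 2 * (n - m) * (L + e) - (n - 1) * (m ^ 2 + (L + e) ^ 2) := by
    intro e he1 he2
    have hb2 : e * (2 * (n - 1) * L + (n - 1)) ≤ δ * (2 * (n - 1) * L + (n - 1)) := by
      apply mul_le_mul_of_nonneg_right he2
      nlinarith [hL0, hn1]
    have he3 : e ≤ 1 := le_trans he2 hδ1
    have hbound : e * (2 * (n - 1) * L + (n - 1) * e) ≤ e * (2 * (n - 1) * L + (n - 1)) := by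
      apply mul_le_mul_of_nonneg_left _ he1.le
      nlinarith [hn1]
    have hpos : 0 ≤ 2 * (n - m) * e := by
      apply mul_nonneg _ he1.le
      linarith
    nlinarith [hAdef.ge, hAdef.le, hb, hb2, hbound, hpos]
  by_cases hne : L + δ = m + 2
  · refine ⟨m, L + δ / 2, ?_, by linarith, hmmax, hm0,
      key (δ / 2) (by linarith) (by linarith)⟩
    intro h
    linarith
  · exact ⟨m, L + δ, hne, by linarith, hmmax, hm0, key δ hδ0 le_rfl⟩

set_option maxHeartbeats 800000 in
/-- Lemma 4.2: existence of parameters m, d for the integral Bernstein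
method. -/
theorem stmt13 (N : ℕ) (p : ℝ) (hN : 3 ≤ N) (hp1 : 1 < p)
    (hp2 : p < ((N : ℝ) + 2) / ((N : ℝ) - 2)) :
    ∃ m d : ℝ,
      d ≠ m + 2 ∧
      2 * ((N : ℝ) - 1) * p / ((N : ℝ) + 2) < d ∧
      max (max (-2) (1 - p)) ((((N : ℝ) - 4) * p - (N : ℝ)) / 2) < m ∧ m ≤ 0 ∧
      0 < 2 * ((N : ℝ) - m) * d - ((N : ℝ) - 1) * (m ^ 2 + d ^ 2) := by
  have hn : (3:ℝ) ≤ (N:ℝ) := by exact_mod_cast hN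
  set n : ℝ := (N:ℝ) with hndef
  clear_value n
  have hnp2 : (0:ℝ) < n + 2 := by linarith
  have hn1 : (0:ℝ) < n - 1 := by linarith
  have hn2 : (0:ℝ) < n - 2 := by linarith
  have hn0 : (0:ℝ) < n := by linarith
  have hpc : p * (n - 2) < n + 2 := by
    have := (lt_div_iff₀ hn2).mp hp2
    linarith
  set L : ℝ := 2 * (n - 1) * p / (n + 2) with hLdef
  have hLeq : L * (n + 2) = 2 * (n - 1) * p := by
    rw [hLdef]; field_simp
  have hL0 : 0 < L := by
    rw [hLdef]; positivity
  clear_value L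
  have hM : (n - 2) * L < 2 * (n - 1) := by
    nlinarith [mul_lt_mul_of_pos_left hpc (by linarith : (0:ℝ) < 2 * (n - 1)), hLeq, hnp2]
  by_cases hc : (n - 1) ^ 2 * p < n * (n + 2)
  · -- Case 1 : m = 0
    have hLU : L * (n - 1) < 2 * n := by nlinarith [hLeq, hnp2, hc]
    set U : ℝ := 2 * n / (n - 1) with hUdef
    have hUeq : U * (n - 1) = 2 * n := by rw [hUdef]; field_simp
    clear_value U
    have hLltU : L < U := by nlinarith [hLU, hUeq, hn1]
    exact stmt13_aux1 n p L U hp1 hpc hn hL0 hUeq hLltU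
  · -- Case 2 : m = -L/(n-1) = -2p/(n+2)
    push_neg at hc
    set m : ℝ := -(L / (n - 1)) with hmdef
    have hmeq : m * (n - 1) = -L := by
      rw [hmdef, neg_mul, div_mul_cancel₀ _ hn1.ne']
    have hmp : m * (n + 2) = -(2 * p) := by
      have h : m * (n - 1) * (n + 2) = -(2 * p) * (n - 1) := by
        rw [hmeq]; linear_combination -hLeq
      exact mul_left_cancel₀ hn1.ne' (by linear_combination h)
    have hm0 : m ≤ 0 := by
      rw [hmdef]; simp only [neg_nonpos]; positivity
    clear_value m
    exact stmt13_aux2 n p L m hp1 hpc hn hL0 hLeq hc hM hmeq hmp hm0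
end

section
/- Let N ≥ 1, p > 1, q > 2p/(p+1), M > 0, and suppose u is a positive radial function on [0,∞) solving −u'' − ((N−1)/r)u' = u^p + M|u'|^q with u(0) = 1, u decreasing, u(r) → 0 as r → ∞, and satisfying both sup_r |u'(r)| ≤ c₁·M^(−(p+1)/((p+1)q−2p)) and sup_r r^((p+1)/(p−1))|u'(r)| ≤ c₂ for constants c₁, c₂ depending only on N, p, q. Then 1 ≤ (c₁ + ((p−1)/2)c₂)·M^(−2/((p+1)q−2p)). In particular no such solution exists once M > ((c₁ + ((p−1)/2)c₂))^(((p+1)q−2p)/2). -/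
/-!
Split `1 - u(R) = u(0) - u(R)` plus `u(R)`. The mean value theorem with the uniform bound on `|u'|`
controls the first term by `c₁ M^{-(p+1)/D} R`, where `D = (p+1)q - 2p > 0`. Since `u` vanishes at
infinity, integrating the decay bound `|u'(r)| ≤ c₂ r^{-(p+1)/(p-1)}` from `R` to `∞` controls the
second by `((p-1)/2) c₂ R^{-2/(p-1)}`. The choice `R = M^{(p-1)/D}` makes both terms proportional
to `M^{-2/D}`, which tends to `0` as `M → ∞`.
-/

open Real Filter Set Topology

theorem le_div_mul_rpow_neg_of_tendsto_zero {f f' : ℝ → ℝ} {R a c : ℝ} (hR : 0 < R)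
    (ha : 0 < a) (hf : ∀ x, R ≤ x → HasDerivAt f (f' x) x)
    (hf' : ∀ x, R < x → x ^ (a + 1) * |f' x| ≤ c) (hlim : Tendsto f atTop (𝓝 0)) :
    f R ≤ c / a * R ^ (-a) := by
  set φ : ℝ → ℝ := fun x => f x - c / a * x ^ (-a)
  have hφ : ∀ x, R ≤ x → HasDerivAt φ (f' x + c / x ^ (a + 1)) x := by
    intro x hx
    have hx0 : 0 < x := hR.trans_le hx
    refine ((hf x hx).sub ((hasDerivAt_rpow_const (Or.inl hx0.ne')).const_mul (c / a))).congr_deriv ?_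
    rw [show -a - 1 = -(a + 1) by ring, rpow_neg hx0.le]
    field_simp
    ring
  have hmono : MonotoneOn φ (Ici R) := by
    refine monotoneOn_of_deriv_nonneg (convex_Ici R)
      (fun x hx => (hφ x hx).continuousAt.continuousWithinAt)
      (fun x hx => (hφ x (interior_subset hx)).differentiableAt.differentiableWithinAt)
      (fun x hx => ?_)
    rw [interior_Ici] at hx
    have hx0 : 0 < x ^ (a + 1) := rpow_pos_of_pos (hR.trans hx) _
    have hbound : |f' x| ≤ c / x ^ (a + 1) := by
      rw [le_div_iff₀ hx0, mul_comm]
      exact hf' x hx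
    rw [(hφ x hx.le).deriv]
    linarith [neg_abs_le (f' x)]
  have hφlim : Tendsto φ atTop (𝓝 0) := by
    simpa using hlim.sub ((tendsto_rpow_neg_atTop ha).const_mul (c / a))
  have hφR : φ R ≤ 0 :=
    ge_of_tendsto hφlim <| eventually_atTop.2 ⟨R, fun x hx => hmono self_mem_Ici hx hx⟩
  simpa [φ, sub_nonpos] using hφR

theorem le_rpow_inv_of_one_le_mul_rpow_neg {E M e : ℝ} (hM : 0 < M) (he : 0 < e)
    (h : 1 ≤ E * M ^ (-e)) : M ≤ E ^ e⁻¹ := by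
  have hMe : 0 < M ^ e := rpow_pos_of_pos hM e
  have hle : M ^ e ≤ E := by
    rwa [rpow_neg hM.le, ← div_eq_mul_inv, one_le_div hMe] at h
  exact (le_rpow_inv_iff_of_pos hM.le (hMe.le.trans hle) he).2 hle

theorem stmt15_general (p q M c₁ c₂ : ℝ) (hp : 1 < p)
    (hq : 2 * p / (p + 1) < q) (hM : 0 < M)
    (u u' : ℝ → ℝ)
    (hu : ∀ r : ℝ, 0 ≤ r → HasDerivAt u (u' r) r)
    (h0 : u 0 = 1)
    (hlim : Filter.Tendsto u Filter.atTop (nhds 0))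
    (hb1 : ∀ r : ℝ, 0 ≤ r → |u' r| ≤ c₁ * M ^ (-((p + 1) / ((p + 1) * q - 2 * p))))
    (hb2 : ∀ r : ℝ, 0 < r → r ^ ((p + 1) / (p - 1)) * |u' r| ≤ c₂) :
    1 ≤ (c₁ + (p - 1) / 2 * c₂) * M ^ (-(2 / ((p + 1) * q - 2 * p))) ∧
    ((c₁ + (p - 1) / 2 * c₂) ^ (((p + 1) * q - 2 * p) / 2) < M → False) := by
  have hp1 : 0 < p - 1 := by linarith
  set D := (p + 1) * q - 2 * p
  have hD : 0 < D := by
    have := (div_lt_iff₀ (by linarith : (0 : ℝ) < p + 1)).1 hq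
    linarith
  set R := M ^ ((p - 1) / D)
  have hR : 0 < R := rpow_pos_of_pos hM _
  have head : u 0 - u R ≤ c₁ * M ^ (-((p + 1) / D)) * R := by
    have := norm_image_sub_le_of_norm_deriv_le_segment' (f := u)
      (fun x hx => (hu x hx.1).hasDerivWithinAt) (fun x hx => hb1 x hx.1) R
      (right_mem_Icc.2 hR.le)
    rw [Real.norm_eq_abs, abs_sub_comm, sub_zero] at this
    exact (le_abs_self _).trans this
  have tail : u R ≤ c₂ / (2 / (p - 1)) * R ^ (-(2 / (p - 1))) := by
    refine le_div_mul_rpow_neg_of_tendsto_zero hR (by positivity)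
      (fun x hx => hu x (hR.le.trans hx)) (fun x hx => ?_) hlim
    rw [show 2 / (p - 1) + 1 = (p + 1) / (p - 1) by field_simp; ring]
    exact hb2 x (hR.trans hx)
  have hhead : M ^ (-((p + 1) / D)) * R = M ^ (-(2 / D)) := by
    rw [← rpow_add hM]; congr 1; field_simp; ring
  have htail : R ^ (-(2 / (p - 1))) = M ^ (-(2 / D)) := by
    rw [← rpow_mul hM.le]; congr 1; field_simp
  have key : 1 ≤ (c₁ + (p - 1) / 2 * c₂) * M ^ (-(2 / D)) := by
    rw [div_div_eq_mul_div, htail] at tail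
    rw [mul_assoc, hhead] at head
    linarith
  refine ⟨key, fun hlt => ?_⟩
  have := le_rpow_inv_of_one_le_mul_rpow_neg hM (by positivity) key
  rw [inv_div] at this
  exact this.not_gt hlt

/-- quantitative nonexistence of radial ground states with u(0) = 1
for large M when q > 2p/(p+1) (Theorem 5.3). -/
theorem stmt15 (N p q M c₁ c₂ : ℝ) (hN : 1 ≤ N) (hp : 1 < p)
    (hq : 2 * p / (p + 1) < q) (hM : 0 < M) (hc₁ : 0 < c₁) (hc₂ : 0 < c₂)
    (u u' u'' : ℝ → ℝ)
    (hu : ∀ r : ℝ, 0 ≤ r → HasDerivAt u (u' r) r)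
    (hu' : ∀ r : ℝ, 0 < r → HasDerivAt u' (u'' r) r)
    (hode : ∀ r : ℝ, 0 < r →
      -(u'' r) - (N - 1) / r * u' r = u r ^ p + M * |u' r| ^ q)
    (hpos : ∀ r : ℝ, 0 ≤ r → 0 < u r)
    (h0 : u 0 = 1)
    (hdec : StrictAntiOn u (Set.Ici 0))
    (hlim : Filter.Tendsto u Filter.atTop (nhds 0))
    (hb1 : ∀ r : ℝ, 0 ≤ r → |u' r| ≤ c₁ * M ^ (-((p + 1) / ((p + 1) * q - 2 * p))))
    (hb2 : ∀ r : ℝ, 0 < r → r ^ ((p + 1) / (p - 1)) * |u' r| ≤ c₂) :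
    1 ≤ (c₁ + (p - 1) / 2 * c₂) * M ^ (-(2 / ((p + 1) * q - 2 * p))) ∧
    ((c₁ + (p - 1) / 2 * c₂) ^ (((p + 1) * q - 2 * p) / 2) < M → False) :=
  stmt15_general p q M c₁ c₂ hp hq hM u u' hu h0 hlim hb1 hb2
end

section
/- Let N ≥ 2, q > N/(N−1), p > 1, M > 0, and let u be a positive, radial, decreasing C² solution on (0,∞) of −u'' − ((N−1)/r)u' = u^p + M|u'|^q with u' ≤ 0 and r·|u'(r)|^(q−1) ≤ ((N−1)(q−1)−1)/((q−1)M) for all r > 0. Then the energy H(r) = u^(p+1)/(p+1) + (u')²/2 satisfies H'(r) ≤ −(u')²/((q−1)r) for all r > 0; in particular H is nonincreasing and |u'(r)| ≤ √(2/(p+1))·u(0)^((p+1)/2). -/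
/-!
Along a solution with `u' ≤ 0`, the ODE turns the derivative of the energy
`H = u^(p+1)/(p+1) + (u')²/2` into `H' = M|u'|^(q+1) − ((N−1)/r)(u')²`, the source term `u^p u'`
cancelling. Writing `M|u'|^(q+1) = M|u'|^(q−1)·(u')²`, the a priori bound on `r·|u'|^(q−1)` gives
`(r/(u')²)·H' ≤ ((N−1)(q−1)−1)/(q−1) + 1 − N = −1/(q−1)`. Hence `H` is nonincreasing on `(0, ∞)`,
so `(u')²/2 ≤ H(r) ≤ H(0⁺) = u(0)^(p+1)/(p+1)`.
-/

open Filter Set Topology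

lemma abs_rpow_add_one_of_nonpos {x q : ℝ} (hx : x ≤ 0) (hq : q + 1 ≠ 0) :
    |x| ^ (q + 1) = -(|x| ^ q * x) := by
  rw [Real.rpow_add' (abs_nonneg x) hq, Real.rpow_one, abs_of_nonpos hx, mul_neg]

lemma abs_rpow_add_one_eq_rpow_sub_one_mul_sq (x : ℝ) {q : ℝ} (hq : q + 1 ≠ 0) :
    |x| ^ (q + 1) = |x| ^ (q - 1) * x ^ 2 := by
  rw [show q + 1 = (q - 1) + 2 by ring, Real.rpow_add' (abs_nonneg x) (by convert hq using 1; ring),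
    Real.rpow_two, sq_abs]

lemma hasDerivAt_energy {u v : ℝ → ℝ} {a b p r : ℝ} (hu : HasDerivAt u a r)
    (hv : HasDerivAt v b r) (hur : u r ≠ 0) (hp : p + 1 ≠ 0) :
    HasDerivAt (fun s => u s ^ (p + 1) / (p + 1) + v s ^ 2 / 2) (u r ^ p * a + v r * b) r := by
  refine (((hu.rpow_const (Or.inl hur)).div_const _).add ((hv.pow 2).div_const 2)).congr_deriv ?_
  rw [add_sub_cancel_right]
  field_simp
  ring

lemma energy_deriv_eq_of_ode {N M p q r x y z : ℝ}
    (hode : -z - (N - 1) / r * y = x ^ p + M * |y| ^ q) (hy : y ≤ 0) (hq : q + 1 ≠ 0) :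
    x ^ p * y + y * z = M * |y| ^ (q + 1) - (N - 1) / r * y ^ 2 := by
  rw [abs_rpow_add_one_of_nonpos hy hq]
  linear_combination (-y) * hode

lemma gradient_term_le_of_bound {K M q r x : ℝ} (hM : 0 < M) (hq : 1 < q) (hr : 0 < r)
    (hb : r * |x| ^ (q - 1) ≤ (K * (q - 1) - 1) / ((q - 1) * M)) :
    M * |x| ^ (q + 1) - K / r * x ^ 2 ≤ -(x ^ 2) / ((q - 1) * r) := by
  have hq1 : 0 < q - 1 := sub_pos.2 hq
  have hgrad : M * |x| ^ (q - 1) ≤ (K * (q - 1) - 1) / ((q - 1) * r) := by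
    rw [le_div_iff₀ (by positivity)] at hb ⊢
    linarith
  calc M * |x| ^ (q + 1) - K / r * x ^ 2 = M * |x| ^ (q - 1) * x ^ 2 - K / r * x ^ 2 := by
        rw [abs_rpow_add_one_eq_rpow_sub_one_mul_sq x (by linarith), mul_assoc]
    _ ≤ (K * (q - 1) - 1) / ((q - 1) * r) * x ^ 2 - K / r * x ^ 2 := by gcongr
    _ = -(x ^ 2) / ((q - 1) * r) := by field_simp; ring

lemma AntitoneOn.le_of_tendsto_nhdsGT {f : ℝ → ℝ} {a r L : ℝ} (hf : AntitoneOn f (Ioi a)) (hL : Tendsto f (𝓝[>] a) (𝓝 L)) (hr : a < r) :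
    f r ≤ L :=
  ge_of_tendsto hL (by filter_upwards [Ioc_mem_nhdsGT hr] with s hs using hf hs.1 hr hs.2)

lemma abs_le_sqrt_mul_rpow_of_sq_div_two_le {x y c : ℝ} (hc : 0 < c) (hy : 0 ≤ y)
    (h : x ^ 2 / 2 ≤ y ^ c / c) : |x| ≤ √(2 / c) * y ^ (c / 2) := by
  have hsqrt : √(2 / c) * y ^ (c / 2) = √(2 / c * y ^ c) := by
    rw [Real.sqrt_mul (by positivity), Real.sqrt_eq_rpow (y ^ c), ← Real.rpow_mul hy]
    ring_nf
  rw [hsqrt]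
  refine Real.abs_le_sqrt ?_
  rw [div_le_div_iff₀ two_pos hc] at h
  rw [div_mul_eq_mul_div, le_div_iff₀ hc]
  linarith

theorem stmt16_general (N p q M : ℝ) (hN : 2 ≤ N) (hq : N / (N - 1) < q) (hp : 1 < p)
    (hM : 0 < M)
    (u u' u'' : ℝ → ℝ)
    (hu : ∀ r : ℝ, 0 ≤ r → HasDerivAt u (u' r) r)
    (hu'' : ∀ r : ℝ, 0 < r → HasDerivAt u' (u'' r) r)
    (hode : ∀ r : ℝ, 0 < r →
      -(u'' r) - (N - 1) / r * u' r = u r ^ p + M * |u' r| ^ q)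
    (hpos : ∀ r : ℝ, 0 ≤ r → 0 < u r)
    (hneg : ∀ r : ℝ, 0 ≤ r → u' r ≤ 0)
    (hu'cont : Filter.Tendsto u' (nhdsWithin 0 (Set.Ioi 0)) (nhds 0))
    (hbound : ∀ r : ℝ, 0 < r →
      r * |u' r| ^ (q - 1) ≤ ((N - 1) * (q - 1) - 1) / ((q - 1) * M)) :
    (∀ r : ℝ, 0 < r →
      HasDerivAt (fun s : ℝ => u s ^ (p + 1) / (p + 1) + u' s ^ 2 / 2)
        (M * |u' r| ^ (q + 1) - (N - 1) / r * u' r ^ 2) r ∧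
      M * |u' r| ^ (q + 1) - (N - 1) / r * u' r ^ 2 ≤ -(u' r ^ 2) / ((q - 1) * r)) ∧
    AntitoneOn (fun s : ℝ => u s ^ (p + 1) / (p + 1) + u' s ^ 2 / 2) (Set.Ioi 0) ∧
    (∀ r : ℝ, 0 < r → |u' r| ≤ Real.sqrt (2 / (p + 1)) * u 0 ^ ((p + 1) / 2)) := by
  have hq1 : 1 < q := lt_trans ((one_lt_div (by linarith)).2 (by linarith)) hq
  have hp1 : 0 < p + 1 := by linarith
  have hderiv (r : ℝ) (hr : 0 < r) := (hasDerivAt_energy (hu r hr.le) (hu'' r hr)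
    (hpos r hr.le).ne' hp1.ne').congr_deriv (energy_deriv_eq_of_ode (hode r hr) (hneg r hr.le)
    (by linarith))
  have hdecay (r : ℝ) (hr : 0 < r) := gradient_term_le_of_bound hM hq1 hr (hbound r hr)
  have hanti : AntitoneOn (fun s : ℝ => u s ^ (p + 1) / (p + 1) + u' s ^ 2 / 2) (Ioi 0) := by
    refine antitoneOn_of_hasDerivWithinAt_nonpos (convex_Ioi 0)
      (f' := fun r => M * |u' r| ^ (q + 1) - (N - 1) / r * u' r ^ 2)
      (fun r hr => (hderiv r hr).continuousAt.continuousWithinAt) ?_ ?_ <;> rw [interior_Ioi]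
    · exact fun r hr => (hderiv r hr).hasDerivWithinAt
    · exact fun r hr => (hdecay r hr).trans <| div_nonpos_of_nonpos_of_nonneg
        (neg_nonpos.2 (sq_nonneg _)) (mul_nonneg (by linarith) hr.le)
  refine ⟨fun r hr => ⟨hderiv r hr, hdecay r hr⟩, hanti, fun r hr => ?_⟩
  have hlim : Tendsto (fun s : ℝ => u s ^ (p + 1) / (p + 1) + u' s ^ 2 / 2) (𝓝[>] 0)
      (𝓝 (u 0 ^ (p + 1) / (p + 1) + 0 ^ 2 / 2)) :=
    ((((hu 0 le_rfl).continuousAt.continuousWithinAt.tendsto).rpow_const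
      (Or.inr hp1.le)).div_const _).add ((hu'cont.pow 2).div_const 2)
  have hH := hanti.le_of_tendsto_nhdsGT hlim hr
  have hpot : 0 ≤ u r ^ (p + 1) / (p + 1) := by have := hpos r hr.le; positivity
  refine abs_le_sqrt_mul_rpow_of_sq_div_two_le hp1 (hpos 0 le_rfl).le ?_
  norm_num at hH
  linarith

/-- Proposition 5.1: monotonicity of the energy
H(r) = u^(p+1)/(p+1) + (u')²/2 and the gradient bound
|u'(r)| ≤ √(2/(p+1))·u(0)^((p+1)/2). -/
theorem stmt16 (N p q M : ℝ) (hN : 2 ≤ N) (hq : N / (N - 1) < q) (hp : 1 < p)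
    (hM : 0 < M)
    (u u' u'' : ℝ → ℝ)
    (hu : ∀ r : ℝ, 0 ≤ r → HasDerivAt u (u' r) r)
    (hu'' : ∀ r : ℝ, 0 < r → HasDerivAt u' (u'' r) r)
    (hode : ∀ r : ℝ, 0 < r →
      -(u'' r) - (N - 1) / r * u' r = u r ^ p + M * |u' r| ^ q)
    (hpos : ∀ r : ℝ, 0 ≤ r → 0 < u r)
    (hneg : ∀ r : ℝ, 0 ≤ r → u' r ≤ 0)
    (hu'0 : u' 0 = 0)
    (hu'cont : Filter.Tendsto u' (nhdsWithin 0 (Set.Ioi 0)) (nhds 0))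
    (hbound : ∀ r : ℝ, 0 < r →
      r * |u' r| ^ (q - 1) ≤ ((N - 1) * (q - 1) - 1) / ((q - 1) * M)) :
    (∀ r : ℝ, 0 < r →
      HasDerivAt (fun s : ℝ => u s ^ (p + 1) / (p + 1) + u' s ^ 2 / 2)
        (M * |u' r| ^ (q + 1) - (N - 1) / r * u' r ^ 2) r ∧
      M * |u' r| ^ (q + 1) - (N - 1) / r * u' r ^ 2 ≤ -(u' r ^ 2) / ((q - 1) * r)) ∧
    AntitoneOn (fun s : ℝ => u s ^ (p + 1) / (p + 1) + u' s ^ 2 / 2) (Set.Ioi 0) ∧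
    (∀ r : ℝ, 0 < r → |u' r| ≤ Real.sqrt (2 / (p + 1)) * u 0 ^ ((p + 1) / 2)) :=
  stmt16_general N p q M hN hq hp hM u u' u'' hu hu'' hode hpos hneg hu'cont hbound
end
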